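/- Let W be an algebraic Weyl curvature tensor on a Euclidean vector space V of dimension n ≥ 4 and h ∈ E_W. Then W(hFh*) = h*W(F)h for every skew-symmetric endomorphism F, and equivalently W(hx, hy, z, u) = W(x, y, hz, hu) for all x,y,z,u in V. -/
import Mathlib


/- Common setup: algebraic Weyl curvature tensors on a Euclidean vector space. -/

open scoped RealInnerProductSpace
open Finset

/-- A curvature-type 4-linear tensor on `V`. -/
abbrev Tensor4 (V : Type*) [NormedAddCommGroup V] [InnerProductSpace ℝ V] : Type _ :=
  V →ₗ[ℝ] V →ₗ[ℝ] V →ₗ[ℝ] V →ₗ[ℝ] ℝ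

variable {V : Type*} [NormedAddCommGroup V] [InnerProductSpace ℝ V] [FiniteDimensional ℝ V]

/-- `W` is an algebraic Weyl curvature tensor: it has the symmetries of a curvature
tensor, satisfies the first Bianchi identity, and is totally trace-free. -/
structure IsWeylTensor (W : Tensor4 V) : Prop where
  antisym₁ : ∀ x y z u, W x y z u = - W y x z u
  antisym₂ : ∀ x y z u, W x y z u = - W x y u z
  pair_symm : ∀ x y z u, W x y z u = W z u x y
  bianchi : ∀ x y z u, W x y z u + W y z x u + W z x y u = 0
  trace_free : ∀ (b : OrthonormalBasis (Fin (Module.finrank ℝ V)) ℝ V) (x y : V),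
      ∑ i, W x (b i) y (b i) = 0

/-- The extension of `W` to endomorphisms, `W(h) = Σᵢ W(eᵢ, ·, h eᵢ, ·)`,
viewed as a bilinear form (identified with an endomorphism via the metric). -/
noncomputable def weylExt {ι : Type*} [Fintype ι]
    (W : Tensor4 V) (b : OrthonormalBasis ι ℝ V) (h : V →ₗ[ℝ] V) (v w : V) : ℝ :=
  ∑ i, W (b i) v (h (b i)) w

/-- The space `E_W`: endomorphisms `h` with `W(x,y,hz,·) + W(y,z,hx,·) + W(z,x,hy,·) = 0`. -/
def memE (W : Tensor4 V) (h : V →ₗ[ℝ] V) : Prop :=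
  ∀ x y z u, W x y (h z) u + W y z (h x) u + W z x (h y) u = 0

/-- The Lie algebra `g_W` of the symmetry group of `W`. -/
def memG (W : Tensor4 V) (h : V →ₗ[ℝ] V) : Prop :=
  ∀ x y z u, W (h x) y z u + W x (h y) z u + W x y (h z) u + W x y z (h u) = 0

/-- Skew-symmetric endomorphisms (identified with 2-forms). -/
def IsSkew (F : V →ₗ[ℝ] V) : Prop := ∀ v w, ⟪F v, w⟫ = - ⟪v, F w⟫

/-- Symmetric endomorphisms. -/
def IsSym (F : V →ₗ[ℝ] V) : Prop := ∀ v w, ⟪F v, w⟫ = ⟪v, F w⟫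

/-- The bilinear form `g(F·,·)` associated to an endomorphism `F`. -/
noncomputable def form (F : V →ₗ[ℝ] V) (v w : V) : ℝ := ⟪F v, w⟫

/-- generic pair symmetry from antisymmetries + Bianchi -/
lemma aux_pair_symm {α : Type*} (f : α → α → α → α → ℝ)
    (h1 : ∀ x y z u, f x y z u = - f y x z u)
    (h2 : ∀ x y z u, f x y z u = - f x y u z)
    (hb : ∀ x y z u, f x y z u + f y z x u + f z x y u = 0)
    (x y z u : α) : f x y z u = f z u x y := by
  have b1 := hb x y z u
  have b2 := hb y z u x
  have b3 := hb z u x y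
  have b4 := hb u x y z
  linarith [h1 z x y u, h2 y z u x, h2 z u y x, h1 u y z x, h2 y u z x,
    h1 u x z y, h2 x u z y, h2 x z u y, h1 u x y z, h2 x y u z]

lemma aux_expand3 (W : Tensor4 V) (x y w : V) {ι : Type*} (s : Finset ι) (a : ι → ℝ) (v : ι → V) :
    W x y (∑ j ∈ s, a j • v j) w = ∑ j ∈ s, a j * W x y (v j) w := by
  simp [map_sum, LinearMap.sum_apply, map_smul, smul_eq_mul]

lemma aux_expand1 (W : Tensor4 V) (x y w : V) {ι : Type*} (s : Finset ι) (a : ι → ℝ) (v : ι → V) :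
    W (∑ j ∈ s, a j • v j) x y w = ∑ j ∈ s, a j * W (v j) x y w := by
  simp [map_sum, LinearMap.sum_apply, map_smul, smul_eq_mul]

/-- if `h ∈ E_W` then `W(hFh*) = h*W(F)h` for all skew `F`, and
equivalently `W(hx,hy,z,u) = W(x,y,hz,hu)` for all `x,y,z,u`. -/
theorem stmt11 (hn : 4 ≤ Module.finrank ℝ V) (W : Tensor4 V) (hW : IsWeylTensor W)
    (b : OrthonormalBasis (Fin (Module.finrank ℝ V)) ℝ V)
    (h : V →ₗ[ℝ] V) (hE : memE W h) :
    (∀ F : V →ₗ[ℝ] V, IsSkew F → ∀ v w,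
      weylExt W b (h ∘ₗ F ∘ₗ LinearMap.adjoint h) v w = weylExt W b F (h v) (h w)) ∧
    (∀ x y z u, W (h x) (h y) z u = W x y (h z) (h u)) := by
  -- (†): cyclic identity with `h` in the first slot
  have dagger : ∀ a c d e, W (h a) e c d + W (h c) e d a + W (h d) e a c = 0 := by
    intro a c d e
    have h0 := hE c d a e
    rw [hW.pair_symm c d (h a) e, hW.pair_symm d a (h c) e, hW.pair_symm a c (h d) e] at h0
    linarith
  -- Bianchi for S(x,y,z,u) = W(hx,hy,z,u)
  have bS : ∀ x y z u, W (h x) (h y) z u + W (h y) (h z) x u + W (h z) (h x) y u = 0 := by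
    intro x y z u
    have t1 := dagger x z u (h y)
    have t2 := dagger y x u (h z)
    have t3 := dagger z y u (h x)
    have t4 := dagger y x z (h u)
    linarith [hW.antisym₁ (h z) (h y) u x, hW.antisym₂ (h y) (h z) u x,
      hW.antisym₁ (h x) (h z) u y, hW.antisym₂ (h z) (h x) u y,
      hW.antisym₁ (h y) (h x) u z, hW.antisym₂ (h x) (h y) u z,
      hW.antisym₁ (h u) (h y) x z, hW.antisym₁ (h u) (h z) y x, hW.antisym₁ (h u) (h x) z y]
  have part2 : ∀ x y z u, W (h x) (h y) z u = W x y (h z) (h u) := by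
    intro x y z u
    have hs := aux_pair_symm (fun a c d e => W (h a) (h c) d e)
      (fun a c d e => hW.antisym₁ (h a) (h c) d e)
      (fun a c d e => hW.antisym₂ (h a) (h c) d e) bS x y z u
    simpa [hW.pair_symm (h z) (h u) x y] using hs
  refine ⟨?_, part2⟩
  -- part 1
  intro F hF v w
  have swapW : ∀ a c p q : V, W a p c q - W c p a q = - W c a p q := by
    intro a c p q
    have hb := hW.bianchi c a p q
    have ha := hW.antisym₁ p c a q
    linarith
  set c : Fin (Module.finrank ℝ V) → Fin (Module.finrank ℝ V) → ℝ :=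
    fun j k => ⟪b k, F (b j)⟫ with hc
  have hcskew : ∀ j k, c k j = - c j k := by
    intro j k
    simp only [hc]
    linarith [hF (b k) (b j), real_inner_comm (b j) (F (b k))]
  have hL : weylExt W b (h ∘ₗ F ∘ₗ LinearMap.adjoint h) v w
      = ∑ j, ∑ k, c j k * W (h (b j)) v (h (b k)) w := by
    unfold weylExt
    have e1 : ∀ i : Fin (Module.finrank ℝ V),
        W (b i) v ((h ∘ₗ F ∘ₗ LinearMap.adjoint h) (b i)) w
        = ∑ j, ⟪b i, h (b j)⟫ * W (b i) v (h (F (b j))) w := by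
      intro i
      have hrep : LinearMap.adjoint h (b i) = ∑ j, ⟪b j, LinearMap.adjoint h (b i)⟫ • b j :=
        (b.sum_repr' (LinearMap.adjoint h (b i))).symm
      calc W (b i) v ((h ∘ₗ F ∘ₗ LinearMap.adjoint h) (b i)) w
          = W (b i) v (h (F (∑ j, ⟪b j, LinearMap.adjoint h (b i)⟫ • b j))) w := by
            rw [← hrep]; rfl
        _ = W (b i) v (∑ j, ⟪b j, LinearMap.adjoint h (b i)⟫ • h (F (b j))) w := by
            rw [map_sum, map_sum]
            simp [map_smul]
        _ = ∑ j, ⟪b j, LinearMap.adjoint h (b i)⟫ * W (b i) v (h (F (b j))) w :=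
            aux_expand3 W _ _ _ _ _ _
        _ = ∑ j, ⟪b i, h (b j)⟫ * W (b i) v (h (F (b j))) w := by
            refine Finset.sum_congr rfl fun j _ => ?_
            have hco : ⟪b j, LinearMap.adjoint h (b i)⟫ = ⟪b i, h (b j)⟫ := by
              rw [real_inner_comm]
              exact LinearMap.adjoint_inner_left h (b j) (b i)
            rw [hco]
    rw [Finset.sum_congr rfl fun i _ => e1 i, Finset.sum_comm]
    refine Finset.sum_congr rfl fun j _ => ?_
    have e2 : ∑ i, ⟪b i, h (b j)⟫ * W (b i) v (h (F (b j))) w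
        = W (h (b j)) v (h (F (b j))) w := by
      rw [← aux_expand1 W v (h (F (b j))) w Finset.univ (fun i => ⟪b i, h (b j)⟫) (fun i => b i)]
      rw [b.sum_repr' (h (b j))]
    rw [e2]
    have hrepF : F (b j) = ∑ k, ⟪b k, F (b j)⟫ • b k := (b.sum_repr' (F (b j))).symm
    have hFj : h (F (b j)) = ∑ k, ⟪b k, F (b j)⟫ • h (b k) := by
      conv_lhs => rw [hrepF]
      rw [map_sum]; simp_rw [map_smul]
    rw [hFj]
    exact aux_expand3 W _ _ _ _ _ _
  have GR : weylExt W b F (h v) (h w) = ∑ j, ∑ k, c j k * W (b j) (h v) (b k) (h w) := by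
    unfold weylExt
    refine Finset.sum_congr rfl fun j _ => ?_
    have hrepF : F (b j) = ∑ k, ⟪b k, F (b j)⟫ • b k := (b.sum_repr' (F (b j))).symm
    calc W (b j) (h v) (F (b j)) (h w)
        = W (b j) (h v) (∑ k, ⟪b k, F (b j)⟫ • b k) (h w) := by rw [← hrepF]
      _ = ∑ k, c j k * W (b j) (h v) (b k) (h w) := aux_expand3 W _ _ _ _ _ _
  rw [hL, GR, ← sub_eq_zero, ← Finset.sum_sub_distrib]
  simp_rw [← Finset.sum_sub_distrib]
  have key : ∀ j k : Fin (Module.finrank ℝ V),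
      c j k * W (h (b j)) v (h (b k)) w - c j k * W (b j) (h v) (b k) (h w)
      = -(c k j * W (h (b k)) v (h (b j)) w - c k j * W (b k) (h v) (b j) (h w)) := by
    intro j k
    have hG : W (h (b j)) v (h (b k)) w - W (b j) (h v) (b k) (h w)
        = W (h (b k)) v (h (b j)) w - W (b k) (h v) (b j) (h w) := by
      have s1 := swapW (h (b k)) (h (b j)) v w
      have s2 := swapW (b k) (b j) (h v) (h w)
      have p2 := part2 (b j) (b k) v w
      linarith
    rw [hcskew j k]
    have hm : c j k * (W (h (b j)) v (h (b k)) w - W (b j) (h v) (b k) (h w))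
        = c j k * (W (h (b k)) v (h (b j)) w - W (b k) (h v) (b j) (h w)) := by rw [hG]
    ring_nf at hm ⊢
    linarith [hm]
  set S : ℝ := ∑ j, ∑ k,
      (c j k * W (h (b j)) v (h (b k)) w - c j k * W (b j) (h v) (b k) (h w)) with hS
  have hflip : S = -S := by
    calc S = ∑ j, ∑ k,
        -(c k j * W (h (b k)) v (h (b j)) w - c k j * W (b k) (h v) (b j) (h w)) :=
          Finset.sum_congr rfl fun j _ => Finset.sum_congr rfl fun k _ => key j k
      _ = -∑ j, ∑ k,
          (c k j * W (h (b k)) v (h (b j)) w - c k j * W (b k) (h v) (b j) (h w)) := by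
          simp
      _ = -S := by rw [hS]; rw [Finset.sum_comm]
  linarith
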